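/- arXiv:1601.03515 — 7 statements merged into one kernel-verified Lean document; each statement's English description precedes it below -/
import Mathlib

section
/- Let X and Y be topological spaces and f : X → Y a map. Then f is an α^m-closed map if and only if for each subset S of Y and each open set U of X containing f⁻¹(S), there exists an α^m-open set V of Y such that S ⊆ V and f⁻¹(V) ⊆ U. -/
open Set

def AlphaOpen {X : Type*} [TopologicalSpace X] (A : Set X) : Prop :=
  A ⊆ interior (closure (interior A))

def AlphaClosed {X : Type*} [TopologicalSpace X] (A : Set X) : Prop :=
  AlphaOpen Aᶜ

def AlphaMClosed {X : Type*} [TopologicalSpace X] (A : Set X) : Prop :=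
  ∀ U : Set X, AlphaOpen U → A ⊆ U → interior (closure A) ⊆ U

def AlphaMOpen {X : Type*} [TopologicalSpace X] (A : Set X) : Prop :=
  AlphaMClosed Aᶜ

def AlphaMClosedMap {X Y : Type*} [TopologicalSpace X] [TopologicalSpace Y] (f : X → Y) : Prop :=
  ∀ F : Set X, IsClosed F → AlphaMClosed (f '' F)

def AlphaMOpenMap {X Y : Type*} [TopologicalSpace X] [TopologicalSpace Y] (f : X → Y) : Prop :=
  ∀ U : Set X, IsOpen U → AlphaMOpen (f '' U)

def AlphaMNbhd {X : Type*} [TopologicalSpace X] (N : Set X) (x : X) : Prop :=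
  ∃ G : Set X, AlphaMOpen G ∧ x ∈ G ∧ G ⊆ N

def alphaMClosure {X : Type*} [TopologicalSpace X] (A : Set X) : Set X :=
  ⋂₀ {F : Set X | AlphaMClosed F ∧ A ⊆ F}

def alphaMInterior {X : Type*} [TopologicalSpace X] (A : Set X) : Set X :=
  ⋃₀ {G : Set X | AlphaMOpen G ∧ G ⊆ A}

theorem stmt0 {X Y : Type*} [TopologicalSpace X] [TopologicalSpace Y] (f : X → Y) :
    AlphaMClosedMap f ↔
      ∀ S : Set Y, ∀ U : Set X, IsOpen U → f ⁻¹' S ⊆ U →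
        ∃ V : Set Y, AlphaMOpen V ∧ S ⊆ V ∧ f ⁻¹' V ⊆ U := by
  constructor
  · intro h S U hU hSU
    refine ⟨(f '' Uᶜ)ᶜ, ?_, ?_, ?_⟩
    · show AlphaMClosed _
      rw [compl_compl]
      exact h Uᶜ hU.isClosed_compl
    · intro y hy ⟨x, hx, hfx⟩
      exact hx (hSU (by simpa [hfx] using hy))
    · intro x hx
      by_contra hxU
      exact hx ⟨x, hxU, rfl⟩
  · intro h F hF G hG hFG
    obtain ⟨V, hV, hGV, hVU⟩ := h Gᶜ Fᶜ hF.isOpen_compl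
      (fun x hx hxF => hx (hFG ⟨x, hxF, rfl⟩))
    have hsub : f '' F ⊆ Vᶜ := by
      rintro y ⟨x, hx, rfl⟩ hyV
      exact hVU hyV hx
    have hVG : Vᶜ ⊆ G := compl_subset_comm.mp hGV
    exact (closure_mono hsub |> interior_mono).trans (hV G hG hVG)
end

section
/- Let X and Y be topological spaces and f : X → Y a map such that for each subset S of Y and each open set U of X containing f⁻¹(S), there exists an α^m-open set V of Y with S ⊆ V and f⁻¹(V) ⊆ U. Then f is an α^m-closed map. -/
open Set

theorem stmt1 {X Y : Type*} [TopologicalSpace X] [TopologicalSpace Y] (f : X → Y)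
    (h : ∀ S : Set Y, ∀ U : Set X, IsOpen U → f ⁻¹' S ⊆ U →
      ∃ V : Set Y, AlphaMOpen V ∧ S ⊆ V ∧ f ⁻¹' V ⊆ U) :
    AlphaMClosedMap f := by
  intro F hF U hUopen hFU
  obtain ⟨V, hV, hSV, hVU⟩ := h Uᶜ Fᶜ hF.isOpen_compl (by
    intro x hx hxF
    exact hx (hFU ⟨x, hxF, rfl⟩))
  have hFVc : f '' F ⊆ Vᶜ := by
    rintro y ⟨x, hxF, rfl⟩ hyV
    exact hVU hyV hxF
  have hVcU : Vᶜ ⊆ U := fun y hy => by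
    by_contra hyU
    exact hy (hSV hyU)
  calc interior (closure (f '' F)) ⊆ interior (closure Vᶜ) :=
        interior_mono (closure_mono hFVc)
    _ ⊆ U := hV U hUopen hVcU
end

section
/- Let X, Y, Z be topological spaces and f : X → Y, g : Y → Z maps such that g ∘ f : X → Z is an α^m-closed map. If f is continuous and surjective, then g is an α^m-closed map. -/
open Set

theorem stmt5 {X Y Z : Type*} [TopologicalSpace X] [TopologicalSpace Y] [TopologicalSpace Z]
    (f : X → Y) (g : Y → Z)
    (hgf : AlphaMClosedMap (g ∘ f))
    (hf : Continuous f) (hsurj : Function.Surjective f) :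
    AlphaMClosedMap g := by
  intro F hF
  have h := hgf (f ⁻¹' F) (hF.preimage hf)
  rwa [Set.image_comp, Set.image_preimage_eq F hsurj] at h
end

section
/- Let X, Y, Z be topological spaces and f : X → Y, g : Y → Z maps such that g ∘ f : X → Z is an α^m-closed map. If g is α^m-irresolute and injective, then f is an α^m-closed map. -/
open Set

theorem stmt6 {X Y Z : Type*} [TopologicalSpace X] [TopologicalSpace Y] [TopologicalSpace Z]
    (f : X → Y) (g : Y → Z)
    (hgf : AlphaMClosedMap (g ∘ f))
    (hgirr : ∀ V : Set Z, AlphaMClosed V → AlphaMClosed (g ⁻¹' V))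
    (hinj : Function.Injective g) :
    AlphaMClosedMap f := by
  intro F hF
  have key : f '' F = g ⁻¹' ((g ∘ f) '' F) := by
    ext y
    constructor
    · rintro ⟨x, hx, rfl⟩
      exact ⟨x, hx, rfl⟩
    · rintro ⟨x, hx, hgx⟩
      exact ⟨x, hx, hinj hgx.symm ▸ rfl⟩
  rw [key]
  exact hgirr _ (hgf F hF)
end

section
/- Let X and Y be topological spaces such that the collection of all α^m-open subsets of Y is closed under arbitrary unions, and let f : X → Y be a map satisfying f(int(A)) ⊆ I_{α^m}(f(A)) for every subset A of X. Then for each x ∈ X and each neighborhood U of x in X, there exists an α^m-neighborhood W of f(x) in Y such that W ⊆ f(U). -/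
open Set

theorem alphaMInterior_subset {X : Type*} [TopologicalSpace X] (A : Set X) :
    alphaMInterior A ⊆ A :=
  sUnion_subset fun _ hG => hG.2

theorem alphaMOpen_alphaMInterior {X : Type*} [TopologicalSpace X]
    (hX : ∀ 𝒮 : Set (Set X), (∀ s ∈ 𝒮, AlphaMOpen s) → AlphaMOpen (⋃₀ 𝒮)) (A : Set X) :
    AlphaMOpen (alphaMInterior A) :=
  hX _ fun _ hG => hG.1

theorem stmt10 {X Y : Type*} [TopologicalSpace X] [TopologicalSpace Y]
    (hY : ∀ 𝒮 : Set (Set Y), (∀ s ∈ 𝒮, AlphaMOpen s) → AlphaMOpen (⋃₀ 𝒮))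
    (f : X → Y)
    (hf : ∀ A : Set X, f '' interior A ⊆ alphaMInterior (f '' A)) :
    ∀ x : X, ∀ U : Set X, (∃ G : Set X, IsOpen G ∧ x ∈ G ∧ G ⊆ U) →
      ∃ W : Set Y, AlphaMNbhd W (f x) ∧ W ⊆ f '' U := by
  rintro x U ⟨G, hG, hxG, hGU⟩
  have hfx : f x ∈ alphaMInterior (f '' G) := hf G ⟨x, by rwa [hG.interior_eq], rfl⟩
  exact ⟨alphaMInterior (f '' G), ⟨_, alphaMOpen_alphaMInterior hY _, hfx, subset_rfl⟩,
    (alphaMInterior_subset _).trans (image_mono hGU)⟩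
end

section
/- Let X and Y be topological spaces. If f : X → Y is an α^m-open map, then for each subset S of Y and each closed set F of X containing f⁻¹(S), there exists an α^m-closed set K of Y such that S ⊆ K and f⁻¹(K) ⊆ F. -/
open Set

theorem stmt12 {X Y : Type*} [TopologicalSpace X] [TopologicalSpace Y]
    (f : X → Y) (hf : AlphaMOpenMap f) :
    ∀ S : Set Y, ∀ F : Set X, IsClosed F → f ⁻¹' S ⊆ F →
      ∃ K : Set Y, AlphaMClosed K ∧ S ⊆ K ∧ f ⁻¹' K ⊆ F := by
  intro S F hF hsub
  refine ⟨(f '' Fᶜ)ᶜ, ?_, ?_, ?_⟩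
  · have := hf Fᶜ hF.isOpen_compl
    simpa [AlphaMOpen] using this
  · intro y hy hmem
    obtain ⟨x, hx, rfl⟩ := hmem
    exact hx (hsub hy)
  · intro x hx
    by_contra hxF
    exact hx ⟨x, hxF, rfl⟩
end

section
/- Let X and Y be topological spaces. If f : X → Y is an α^m-open map, then f⁻¹(C_{α^m}(B)) ⊆ cl(f⁻¹(B)) for each subset B of Y. -/
open Set

theorem stmt13 {X Y : Type*} [TopologicalSpace X] [TopologicalSpace Y]
    (f : X → Y) (hf : AlphaMOpenMap f) :
    ∀ B : Set Y, f ⁻¹' (alphaMClosure B) ⊆ closure (f ⁻¹' B) := by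
  intro B x hx
  by_contra hxc
  set U : Set X := (closure (f ⁻¹' B))ᶜ with hU
  have hUopen : IsOpen U := isClosed_closure.isOpen_compl
  have hxU : x ∈ U := hxc
  have hmo : AlphaMOpen (f '' U) := hf U hUopen
  have hBsub : B ⊆ (f '' U)ᶜ := by
    intro b hb hbim
    obtain ⟨a, haU, rfl⟩ := hbim
    exact haU (subset_closure hb)
  have : alphaMClosure B ⊆ (f '' U)ᶜ := by
    intro y hy
    exact hy ((f '' U)ᶜ) ⟨hmo, hBsub⟩
  exact this hx ⟨x, hxU, rfl⟩
end
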